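/- arXiv:2011.07918 — 5 statements merged into one kernel-verified Lean document; each statement's English description precedes it below -/
import Mathlib

section
/- Hardy-type estimate for the homogeneous Da Prato–Grisvard seminorm: for every θ ∈ (0,1), 1 ≤ q ≤ ∞ and every z ∈ Ḋ_A(θ,q), ‖ t ↦ t^{−θ} ∫₀ᵗ ‖s Ȧ e^{−sA} z‖_X ds/s + t^{1−θ} ‖Ȧ e^{−tA} z‖_X ‖_{L_{q,*}((0,∞))} ≤ ((1 + θ)/θ) ‖z‖_{Ḋ_A(θ,q)}. -/
open MeasureTheory Filter Topology Set
open scoped ENNReal NNReal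

attribute [local instance] Classical.propDecidable

noncomputable section

/-- The measure `dt/t` on `(0,∞)`, used for the `L_{q,*}` spaces. -/
def haarScale : MeasureTheory.Measure ℝ :=
  (MeasureTheory.volume.restrict (Set.Ioi (0:ℝ))).withDensity fun t => ENNReal.ofReal t⁻¹

/-- The `L_q` norm of an `ℝ≥0∞`-valued quantity with respect to a measure on `ℝ`. -/
def lqNorm (q : ℝ≥0∞) (μ : MeasureTheory.Measure ℝ) (F : ℝ → ℝ≥0∞) : ℝ≥0∞ :=
  if q = ⊤ then essSup F μ else (∫⁻ t, F t ^ q.toReal ∂μ) ^ (1 / q.toReal)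

/-- The time interval `(0, T)` for `T ∈ (0,∞]`. -/
def timeInterval (T : ℝ≥0∞) : Set ℝ := {t : ℝ | 0 < t ∧ ENNReal.ofReal t < T}

/-- The abstract setting of the homogeneous Da Prato–Grisvard theory: `X` is a complex
Banach space, `A : D(A) ⊆ X → X` is a closed, densely defined, injective linear operator
such that `−A` generates a bounded strongly continuous analytic semigroup `(e^{−tA})_{t≥0}`
(encoded by the field `S` together with the bounds `S_bdd` and `S_analytic` and the
generator identities `gen_eq` and `gen_eq_dom`); `Y` is a normed space, compatible with `X`
inside an ambient Hausdorff topological vector space `Z`, with `D(A) ⊆ Y` and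
`C₁‖Ax‖ ≤ ‖x‖_Y ≤ C₂‖Ax‖` on `D(A)`; moreover `D(Ȧ) ∩ X = D(A)` (field `inter_sub`). -/
structure DPG (X Y Z : Type*) [NormedAddCommGroup X] [NormedSpace ℂ X] [CompleteSpace X]
    [NormedAddCommGroup Y] [NormedSpace ℂ Y]
    [AddCommGroup Z] [Module ℂ Z] [TopologicalSpace Z] [T2Space Z] : Type _ where
  ιX : X →ₗ[ℂ] Z
  ιY : Y →ₗ[ℂ] Z
  ιX_inj : Function.Injective ιX
  ιY_inj : Function.Injective ιY
  dom : Submodule ℂ X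
  dom_dense : Dense (dom : Set X)
  Aop : dom →ₗ[ℂ] X
  A_closed : IsClosed {p : X × X | ∃ x : dom, (x : X) = p.1 ∧ Aop x = p.2}
  A_inj : ∀ x : dom, Aop x = 0 → (x : X) = 0
  jY : dom →ₗ[ℂ] Y
  j_compat : ∀ x : dom, ιX (x : X) = ιY (jY x)
  C₁ : ℝ
  C₂ : ℝ
  C₁_pos : 0 < C₁
  C₂_pos : 0 < C₂
  normY_lower : ∀ x : dom, C₁ * ‖Aop x‖ ≤ ‖jY x‖
  normY_upper : ∀ x : dom, ‖jY x‖ ≤ C₂ * ‖Aop x‖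
  S : ℝ → X →L[ℂ] X
  S_zero : S 0 = 1
  S_add : ∀ s t : ℝ, 0 ≤ s → 0 ≤ t → S (s + t) = (S s).comp (S t)
  S_strong_cont : ∀ x : X, ContinuousOn (fun t => S t x) (Set.Ici (0:ℝ))
  M₀ : ℝ
  S_bdd : ∀ t : ℝ, 0 ≤ t → ‖S t‖ ≤ M₀
  S_smoothing : ∀ (t : ℝ), 0 < t → ∀ x : X, S t x ∈ dom
  M : ℝ
  S_analytic : ∀ (t : ℝ) (ht : 0 < t) (x : X),
    t * ‖Aop ⟨S t x, S_smoothing t ht x⟩‖ ≤ M * ‖x‖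
  int_mem : ∀ (x : X) (t : ℝ), (∫ s in Set.Ioc (0:ℝ) t, S s x) ∈ dom
  gen_eq : ∀ (x : X) (t : ℝ), 0 ≤ t →
    Aop ⟨∫ s in Set.Ioc (0:ℝ) t, S s x, int_mem x t⟩ = x - S t x
  gen_eq_dom : ∀ (x : dom) (t : ℝ), 0 ≤ t →
    S t (x : X) - (x : X) = - ∫ s in Set.Ioc (0:ℝ) t, S s (Aop x)
  inter_sub : ∀ (x : X) (y : Y),
    (∃ u : ℕ → dom, Filter.Tendsto (fun n => jY (u n)) Filter.atTop (nhds y)) →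
    ιX x = ιY y → x ∈ dom

namespace DPG

variable {X Y Z : Type*} [NormedAddCommGroup X] [NormedSpace ℂ X] [CompleteSpace X]
  [NormedAddCommGroup Y] [NormedSpace ℂ Y]
  [AddCommGroup Z] [Module ℂ Z] [TopologicalSpace Z] [T2Space Z]
  (E : DPG X Y Z)

/-- `A` as an everywhere-defined function on `X` (junk value `0` off the domain). -/
def Afun (x : X) : X := if h : x ∈ E.dom then E.Aop ⟨x, h⟩ else 0

/-- The domain `D(Ȧ) ⊆ Y` of the homogeneous operator: limits in `Y` of sequences in `D(A)`. -/
def DdotA : Set Y :=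
  {y : Y | ∃ u : ℕ → E.dom, Filter.Tendsto (fun n => E.jY (u n)) Filter.atTop (nhds y)}

/-- The homogeneous operator `Ȧ : D(Ȧ) → X`, `Ȧ y = lim_k A x_k` for `x_k → y` in `Y`. -/
def Adot (y : Y) : X :=
  @Classical.epsilon X ⟨0⟩ fun L =>
    ∃ u : ℕ → E.dom, Filter.Tendsto (fun n => E.jY (u n)) Filter.atTop (nhds y) ∧
      Filter.Tendsto (fun n => E.Aop (u n)) Filter.atTop (nhds L)

/-- The sum space `X + D(Ȧ)`, realized inside the ambient space `Z`. -/
def sumSpace : Set Z :=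
  {z : Z | ∃ (x : X) (y : Y), y ∈ E.DdotA ∧ z = E.ιX x + E.ιY y}

/-- A choice of the `X`-component of an element of `X + D(Ȧ)`. -/
def decompX (z : Z) : X :=
  if h : ∃ (x : X) (y : Y), y ∈ E.DdotA ∧ z = E.ιX x + E.ιY y then h.choose else 0

/-- A choice of the `D(Ȧ)`-component of an element of `X + D(Ȧ)`. -/
def decompY (z : Z) : Y :=
  if h : ∃ (x : X) (y : Y), y ∈ E.DdotA ∧ z = E.ιX x + E.ιY y then h.choose_spec.choose else 0

/-- `Ȧ` acting on elements of `Z` lying in (the image of) `D(Ȧ)`. -/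
def AdotZ (z : Z) : X :=
  if h : ∃ y : Y, y ∈ E.DdotA ∧ E.ιY y = z then E.Adot h.choose else 0

/-- The extension of the semigroup to the sum space:
`e^{−tA}(x+y) = e^{−tA}x + y − ∫₀ᵗ e^{−sA}Ȧy ds`. -/
def SGext (t : ℝ) (z : Z) : Z :=
  E.ιX (E.S t (E.decompX z) - ∫ s in Set.Ioc (0:ℝ) t, E.S s (E.Adot (E.decompY z)))
    + E.ιY (E.decompY z)

/-- `Ȧ e^{−tA} z` for `z ∈ X + D(Ȧ)`. -/
def AdotSG (z : Z) (t : ℝ) : X := E.AdotZ (E.SGext t z)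

/-- The homogeneous Da Prato–Grisvard norm `‖z‖_{Ḋ_A(θ,q)}` on the sum space. -/
def homNorm (θ : ℝ) (q : ℝ≥0∞) (z : Z) : ℝ≥0∞ :=
  MeasureTheory.eLpNorm (fun t : ℝ => t ^ (1 - θ) • E.AdotSG z t) q haarScale

/-- The homogeneous Da Prato–Grisvard norm of an element of `X`
(for which `Ȧe^{−tA}x = Ae^{−tA}x`). -/
def homNormX (θ : ℝ) (q : ℝ≥0∞) (x : X) : ℝ≥0∞ :=
  MeasureTheory.eLpNorm (fun t : ℝ => t ^ (1 - θ) • E.Afun (E.S t x)) q haarScale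

/-- The (inhomogeneous) norm of `D_A(θ,q)`. -/
def inhomNorm (θ : ℝ) (q : ℝ≥0∞) (x : X) : ℝ≥0∞ :=
  ENNReal.ofReal ‖x‖ + E.homNormX θ q x

/-- Membership in `D_A(θ,q)`. -/
def memDA (θ : ℝ) (q : ℝ≥0∞) (x : X) : Prop :=
  MeasureTheory.AEStronglyMeasurable (fun t : ℝ => t ^ (1 - θ) • E.Afun (E.S t x)) haarScale ∧
    E.homNormX θ q x < ⊤

/-- Membership in `Ḋ_A(θ,q)`. -/
def memDdot (θ : ℝ) (q : ℝ≥0∞) (z : Z) : Prop :=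
  z ∈ E.sumSpace ∧
    MeasureTheory.AEStronglyMeasurable (fun t : ℝ => t ^ (1 - θ) • E.AdotSG z t) haarScale ∧
    E.homNorm θ q z < ⊤

/-- The `K`-functional of the interpolation couple `(X, D(Ȧ))`. -/
def Kfun (t : ℝ) (z : Z) : ℝ≥0∞ :=
  ⨅ (x : X) (y : Y) (_ : y ∈ E.DdotA) (_ : E.ιX x + E.ιY y = z),
    ENNReal.ofReal (‖x‖ + t * ‖E.Adot y‖)

/-- The real interpolation norm of `(X, D(Ȧ))_{θ,q}`. -/
def interpNorm (θ : ℝ) (q : ℝ≥0∞) (z : Z) : ℝ≥0∞ :=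
  lqNorm q haarScale fun t => ENNReal.ofReal (t ^ (-θ)) * E.Kfun t z

end DPG


/-! The estimate is Hardy's inequality on `((0,∞), dt/t)` applied to
`G(t) = ‖t^{1-θ} Ȧ e^{-tA} z‖`: since `s ‖Ȧ e^{-sA} z‖ = s^θ G(s)`, the first term is
`t^{-θ} ∫₀ᵗ s^θ G(s) ds/s`, whose `L_{q,*}` norm is at most `θ⁻¹ ‖G‖`, and the second term is `G`
itself. For `q = ∞` this follows from `∫₀ᵗ s^θ ds/s = t^θ/θ`. For `q < ∞`, Hölder's inequality
against the weight `s^θ ds/s` on `(0,t]` reduces it to the case `q = 1`, which is an identity by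
Tonelli's theorem since `∫ₛ^∞ t^{-θ} dt/t = s^{-θ}/θ`. -/

section WeightedPowerMean

variable {α : Type*} [MeasurableSpace α]

theorem lintegral_mul_rpow_le (μ : Measure α) {p : ℝ} (hp : 1 ≤ p) {w G : α → ℝ≥0∞}
    (hw : AEMeasurable w μ) (hG : AEMeasurable G μ) :
    (∫⁻ a, w a * G a ∂μ) ^ p ≤ (∫⁻ a, w a ∂μ) ^ (p - 1) * ∫⁻ a, w a * G a ^ p ∂μ := by
  rcases hp.eq_or_lt with rfl | hp
  · simp
  have hpq := Real.HolderConjugate.conjExponent hp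
  set q := p.conjExponent
  have hp0 : 0 < p := hpq.pos
  have hsplit : ∀ a, w a * G a = (w a ^ p⁻¹ * G a) * w a ^ q⁻¹ := fun a => by
    rw [mul_right_comm, ← ENNReal.rpow_add_of_nonneg _ _ (by positivity) hpq.symm.inv_nonneg,
      hpq.inv_add_inv_eq_one, ENNReal.rpow_one]
  have holder : ∫⁻ a, w a * G a ∂μ
      ≤ (∫⁻ a, w a * G a ^ p ∂μ) ^ p⁻¹ * (∫⁻ a, w a ∂μ) ^ q⁻¹ := by
    simpa only [hsplit, Pi.mul_apply, one_div, ENNReal.mul_rpow_of_nonneg _ _ hp0.le,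
      ← ENNReal.rpow_mul, inv_mul_cancel₀ hp0.ne', inv_mul_cancel₀ hpq.symm.ne_zero,
      ENNReal.rpow_one] using
      ENNReal.lintegral_mul_le_Lp_mul_Lq μ hpq ((hw.pow_const p⁻¹).mul hG) (hw.pow_const q⁻¹)
  calc (∫⁻ a, w a * G a ∂μ) ^ p
      ≤ ((∫⁻ a, w a * G a ^ p ∂μ) ^ p⁻¹ * (∫⁻ a, w a ∂μ) ^ q⁻¹) ^ p := by gcongr
    _ = (∫⁻ a, w a ∂μ) ^ (p - 1) * ∫⁻ a, w a * G a ^ p ∂μ := by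
      have hexp : q⁻¹ * p = p - 1 := by
        rw [show q⁻¹ = 1 - p⁻¹ by linarith [hpq.inv_add_inv_eq_one]]
        field_simp
      rw [ENNReal.mul_rpow_of_nonneg _ _ hp0.le, ← ENNReal.rpow_mul, ← ENNReal.rpow_mul,
        inv_mul_cancel₀ hp0.ne', ENNReal.rpow_one, hexp, mul_comm]

end WeightedPowerMean

section HaarScale

instance : SFinite haarScale := by
  unfold haarScale
  infer_instance

theorem ae_haarScale_pos : ∀ᵐ t ∂haarScale, 0 < t := by
  rw [haarScale, ae_withDensity_iff (by fun_prop)]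
  filter_upwards [ae_restrict_mem measurableSet_Ioi] with t ht _ using ht

theorem setLIntegral_haarScale {S : Set ℝ} (hS : MeasurableSet S) (hS0 : S ⊆ Ioi 0)
    (g : ℝ → ℝ≥0∞) :
    ∫⁻ t in S, g t ∂haarScale = ∫⁻ t in S, ENNReal.ofReal t⁻¹ * g t := by
  rw [haarScale, restrict_withDensity hS, Measure.restrict_restrict hS, inter_eq_left.2 hS0,
    lintegral_withDensity_eq_lintegral_mul_non_measurable _ (by fun_prop)
      (.of_forall fun _ => ENNReal.ofReal_lt_top)]
  rfl

theorem setLIntegral_haarScale_Ioc_rpow {θ : ℝ} (hθ : 0 < θ) {t : ℝ} (ht : 0 < t) :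
    ∫⁻ s in Ioc 0 t, ENNReal.ofReal (s ^ θ) ∂haarScale = ENNReal.ofReal (t ^ θ / θ) := by
  have hweight : EqOn (fun s => ENNReal.ofReal s⁻¹ * ENNReal.ofReal (s ^ θ))
      (fun s => ENNReal.ofReal (s ^ (θ - 1))) (Ioc 0 t) := fun s hs => by
    dsimp only
    rw [← ENNReal.ofReal_mul (inv_nonneg.2 hs.1.le), Real.rpow_sub_one hs.1.ne', inv_mul_eq_div]
  rw [setLIntegral_haarScale measurableSet_Ioc Ioc_subset_Ioi_self,
    setLIntegral_congr_fun measurableSet_Ioc hweight,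
    ← ofReal_integral_eq_lintegral_ofReal
      (intervalIntegral.intervalIntegrable_rpow' (by linarith)).1
      ((ae_restrict_mem measurableSet_Ioc).mono fun s hs => Real.rpow_nonneg hs.1.le _),
    ← intervalIntegral.integral_of_le ht.le, integral_rpow (Or.inl (by linarith)),
    sub_add_cancel, Real.zero_rpow hθ.ne', sub_zero]

theorem setLIntegral_haarScale_Ici_rpow_neg {θ : ℝ} (hθ : 0 < θ) {s : ℝ} (hs : 0 < s) :
    ∫⁻ t in Ici s, ENNReal.ofReal (t ^ (-θ)) ∂haarScale = ENNReal.ofReal (s ^ (-θ) / θ) := by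
  have hweight : EqOn (fun t => ENNReal.ofReal t⁻¹ * ENNReal.ofReal (t ^ (-θ)))
      (fun t => ENNReal.ofReal (t ^ (-θ - 1))) (Ici s) := fun t ht => by
    dsimp only
    have ht0 : 0 < t := hs.trans_le ht
    rw [← ENNReal.ofReal_mul (inv_nonneg.2 ht0.le), Real.rpow_sub_one ht0.ne', inv_mul_eq_div]
  rw [setLIntegral_haarScale measurableSet_Ici (Ici_subset_Ioi.2 hs),
    setLIntegral_congr_fun measurableSet_Ici hweight,
    Measure.restrict_congr_set Ioi_ae_eq_Ici.symm,
    ← ofReal_integral_eq_lintegral_ofReal (integrableOn_Ioi_rpow_of_lt (by linarith) hs)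
      ((ae_restrict_mem measurableSet_Ioi).mono fun t ht =>
        Real.rpow_nonneg (hs.trans ht).le _),
    integral_Ioi_rpow_of_lt (by linarith) hs, sub_add_cancel, div_neg, neg_div, neg_neg]

end HaarScale

section HardyOperator

variable {θ : ℝ}

def hardyOperator (θ : ℝ) (G : ℝ → ℝ≥0∞) (t : ℝ) : ℝ≥0∞ :=
  ENNReal.ofReal (t ^ (-θ)) * ∫⁻ s in Ioc 0 t, ENNReal.ofReal (s ^ θ) * G s ∂haarScale

theorem measurable_hardyOperator (θ : ℝ) (G : ℝ → ℝ≥0∞) : Measurable (hardyOperator θ G) :=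
  (by fun_prop : Measurable fun t : ℝ => ENNReal.ofReal (t ^ (-θ))).mul <|
    Monotone.measurable fun _ _ hab =>
      lintegral_mono' (Measure.restrict_mono (Ioc_subset_Ioc_right hab) le_rfl) le_rfl

theorem hardyOperator_congr_ae {G G' : ℝ → ℝ≥0∞} (h : G =ᵐ[haarScale] G') :
    hardyOperator θ G = hardyOperator θ G' := by
  funext t
  unfold hardyOperator
  congr 1
  exact lintegral_congr_ae (ae_restrict_of_ae (h.mono fun s hs => by simp only [hs]))

theorem hardyOperator_le_of_ae_le (hθ : 0 < θ) {G : ℝ → ℝ≥0∞} {B : ℝ≥0∞}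
    (hGB : ∀ᵐ s ∂haarScale, G s ≤ B) {t : ℝ} (ht : 0 < t) :
    hardyOperator θ G t ≤ ENNReal.ofReal θ⁻¹ * B := by
  calc hardyOperator θ G t
      ≤ ENNReal.ofReal (t ^ (-θ)) * ∫⁻ s in Ioc 0 t, ENNReal.ofReal (s ^ θ) * B ∂haarScale := by
        unfold hardyOperator
        gcongr 1
        exact lintegral_mono_ae (ae_restrict_of_ae (hGB.mono fun s hs => by gcongr))
    _ = ENNReal.ofReal θ⁻¹ * B := by
        rw [lintegral_mul_const _ (by fun_prop), setLIntegral_haarScale_Ioc_rpow hθ ht,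
          ← mul_assoc, ← ENNReal.ofReal_mul (by positivity), Real.rpow_neg ht.le]
        congr 2
        field_simp

theorem hardyOperator_rpow_le (hθ : 0 < θ) {p : ℝ} (hp : 1 ≤ p) {G : ℝ → ℝ≥0∞}
    (hG : AEMeasurable G haarScale) {t : ℝ} (ht : 0 < t) :
    hardyOperator θ G t ^ p
      ≤ ENNReal.ofReal (θ ^ (1 - p)) * hardyOperator θ (fun s => G s ^ p) t := by
  have hp0 : 0 < p := zero_lt_one.trans_le hp
  have hscale : (t ^ (-θ)) ^ p * (t ^ θ / θ) ^ (p - 1) = θ ^ (1 - p) * t ^ (-θ) := by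
    rw [← Real.rpow_mul ht.le, Real.div_rpow (by positivity) hθ.le, ← Real.rpow_mul ht.le,
      mul_div_assoc', ← Real.rpow_add ht, show 1 - p = -(p - 1) by ring, Real.rpow_neg hθ.le]
    ring_nf
  calc hardyOperator θ G t ^ p
      ≤ ENNReal.ofReal (t ^ (-θ)) ^ p * ((∫⁻ s in Ioc 0 t, ENNReal.ofReal (s ^ θ) ∂haarScale)
          ^ (p - 1) * ∫⁻ s in Ioc 0 t, ENNReal.ofReal (s ^ θ) * G s ^ p ∂haarScale) := by
        rw [hardyOperator, ENNReal.mul_rpow_of_nonneg _ _ hp0.le]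
        gcongr
        exact lintegral_mul_rpow_le _ hp (by fun_prop) hG.restrict
    _ = ENNReal.ofReal (θ ^ (1 - p)) * hardyOperator θ (fun s => G s ^ p) t := by
        rw [setLIntegral_haarScale_Ioc_rpow hθ ht, hardyOperator, ← mul_assoc, ← mul_assoc,
          ENNReal.ofReal_rpow_of_nonneg (by positivity) hp0.le,
          ENNReal.ofReal_rpow_of_nonneg (by positivity) (by linarith),
          ← ENNReal.ofReal_mul (by positivity), ← ENNReal.ofReal_mul (by positivity), hscale]

theorem lintegral_hardyOperator (hθ : 0 < θ) {F : ℝ → ℝ≥0∞} (hF : Measurable F) :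
    ∫⁻ t, hardyOperator θ F t ∂haarScale = ENNReal.ofReal θ⁻¹ * ∫⁻ s, F s ∂haarScale := by
  set K : ℝ × ℝ → ℝ≥0∞ := {x | x.2 ∈ Ioc 0 x.1}.indicator fun x =>
    ENNReal.ofReal (x.1 ^ (-θ)) * (ENNReal.ofReal (x.2 ^ θ) * F x.2)
  have hK : Measurable K := by
    refine Measurable.indicator (by fun_prop) ?_
    exact (measurableSet_lt measurable_const measurable_snd).inter
      (measurableSet_le measurable_snd measurable_fst)
  have hrow : ∀ t, hardyOperator θ F t = ∫⁻ s, K (t, s) ∂haarScale := fun t => by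
    rw [hardyOperator, ← lintegral_const_mul' _ _ ENNReal.ofReal_ne_top,
      ← lintegral_indicator measurableSet_Ioc]
    rfl
  have hcol : ∀ᵐ s ∂haarScale, ∫⁻ t, K (t, s) ∂haarScale = ENNReal.ofReal θ⁻¹ * F s := by
    filter_upwards [ae_haarScale_pos] with s hs
    have hsection : (fun t => K (t, s)) = (Ici s).indicator fun t =>
        ENNReal.ofReal (t ^ (-θ)) * (ENNReal.ofReal (s ^ θ) * F s) := by
      ext t
      simp [K, indicator_apply, hs]
    rw [hsection, lintegral_indicator measurableSet_Ici, lintegral_mul_const _ (by fun_prop),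
      setLIntegral_haarScale_Ici_rpow_neg hθ hs, ← mul_assoc,
      ← ENNReal.ofReal_mul (by positivity), Real.rpow_neg hs.le]
    congr 2
    field_simp
  calc ∫⁻ t, hardyOperator θ F t ∂haarScale
      = ∫⁻ t, ∫⁻ s, K (t, s) ∂haarScale ∂haarScale := lintegral_congr hrow
    _ = ∫⁻ s, ∫⁻ t, K (t, s) ∂haarScale ∂haarScale := lintegral_lintegral_swap hK.aemeasurable
    _ = ∫⁻ s, ENNReal.ofReal θ⁻¹ * F s ∂haarScale := lintegral_congr_ae hcol
    _ = ENNReal.ofReal θ⁻¹ * ∫⁻ s, F s ∂haarScale := lintegral_const_mul _ hF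

theorem lintegral_hardyOperator_rpow_le (hθ : 0 < θ) {p : ℝ} (hp : 1 ≤ p) {G : ℝ → ℝ≥0∞}
    (hG : Measurable G) :
    ∫⁻ t, hardyOperator θ G t ^ p ∂haarScale
      ≤ ENNReal.ofReal (θ ^ (-p)) * ∫⁻ t, G t ^ p ∂haarScale := by
  calc ∫⁻ t, hardyOperator θ G t ^ p ∂haarScale
      ≤ ∫⁻ t, ENNReal.ofReal (θ ^ (1 - p)) * hardyOperator θ (fun s => G s ^ p) t ∂haarScale :=
        lintegral_mono_ae <| ae_haarScale_pos.mono fun _ ht =>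
          hardyOperator_rpow_le hθ hp hG.aemeasurable ht
    _ = ENNReal.ofReal (θ ^ (-p)) * ∫⁻ t, G t ^ p ∂haarScale := by
        rw [lintegral_const_mul _ (measurable_hardyOperator _ _),
          lintegral_hardyOperator hθ (hG.pow_const p), ← mul_assoc,
          ← ENNReal.ofReal_mul (by positivity), ← Real.rpow_neg_one,
          ← Real.rpow_add hθ, show 1 - p + -1 = -p by ring]

theorem eLpNorm_hardyOperator_le (hθ : 0 < θ) {q : ℝ≥0∞} (hq : 1 ≤ q) {G : ℝ → ℝ≥0∞}
    (hG : AEMeasurable G haarScale) :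
    eLpNorm (hardyOperator θ G) q haarScale ≤ ENNReal.ofReal θ⁻¹ * eLpNorm G q haarScale := by
  rcases eq_or_ne q ∞ with rfl | hq_top
  · simp only [eLpNorm_exponent_top, eLpNormEssSup, enorm_eq_self]
    refine essSup_le_of_ae_le _ ?_
    filter_upwards [ae_haarScale_pos] with t ht
    exact hardyOperator_le_of_ae_le hθ (ENNReal.ae_le_essSup G) ht
  have hp : 1 ≤ q.toReal := by simpa using ENNReal.toReal_mono hq_top hq
  have hp0 : 0 < q.toReal := zero_lt_one.trans_le hp
  rw [hardyOperator_congr_ae hG.ae_eq_mk, eLpNorm_congr_ae hG.ae_eq_mk]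
  simp only [eLpNorm_eq_lintegral_rpow_enorm_toReal (zero_lt_one.trans_le hq).ne' hq_top,
    enorm_eq_self]
  calc (∫⁻ t, hardyOperator θ (hG.mk G) t ^ q.toReal ∂haarScale) ^ (1 / q.toReal)
      ≤ (ENNReal.ofReal (θ ^ (-q.toReal)) * ∫⁻ t, hG.mk G t ^ q.toReal ∂haarScale)
          ^ (1 / q.toReal) := by
        gcongr
        exact lintegral_hardyOperator_rpow_le hθ hp hG.measurable_mk
    _ = ENNReal.ofReal θ⁻¹ * (∫⁻ t, hG.mk G t ^ q.toReal ∂haarScale) ^ (1 / q.toReal) := by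
        rw [ENNReal.mul_rpow_of_nonneg _ _ (by positivity),
          ENNReal.ofReal_rpow_of_nonneg (by positivity) (by positivity), ← Real.rpow_mul hθ.le,
          neg_mul, mul_one_div_cancel hp0.ne', Real.rpow_neg_one]

end HardyOperator

theorem lqNorm_eq_eLpNorm {q : ℝ≥0∞} (hq : q ≠ 0) (μ : Measure ℝ) (F : ℝ → ℝ≥0∞) :
    lqNorm q μ F = eLpNorm F q μ := by
  unfold lqNorm
  split_ifs with hq_top
  · simp [hq_top, eLpNorm_exponent_top, eLpNormEssSup]
  · simp [eLpNorm_eq_lintegral_rpow_enorm_toReal hq hq_top]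

theorem enorm_smul_eq_rpow_mul {V : Type*} [NormedAddCommGroup V] [NormedSpace ℝ V]
    {s : ℝ} (hs : 0 < s) (θ : ℝ) (x : V) :
    ‖s • x‖ₑ = ENNReal.ofReal (s ^ θ) * ‖s ^ (1 - θ) • x‖ₑ := by
  rw [enorm_smul, enorm_smul, ← mul_assoc, Real.enorm_eq_ofReal hs.le,
    Real.enorm_eq_ofReal (Real.rpow_nonneg hs.le _),
    ← ENNReal.ofReal_mul (by positivity), ← Real.rpow_add hs, add_sub_cancel, Real.rpow_one]

namespace DPG

/-- Hardy-type estimate for the homogeneous Da Prato–Grisvard seminorm: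
for `θ ∈ (0,1)`, `1 ≤ q ≤ ∞` and `z ∈ Ḋ_A(θ,q)`,
`‖ t ↦ t^{−θ} ∫₀ᵗ ‖s Ȧ e^{−sA} z‖ ds/s + t^{1−θ}‖Ȧ e^{−tA} z‖ ‖_{L_{q,*}(0,∞)}
  ≤ ((1+θ)/θ) ‖z‖_{Ḋ_A(θ,q)}`. -/
theorem hardy_homogeneous_seminorm
    {X Y Z : Type*} [NormedAddCommGroup X] [NormedSpace ℂ X] [CompleteSpace X]
    [NormedAddCommGroup Y] [NormedSpace ℂ Y]
    [AddCommGroup Z] [Module ℂ Z] [TopologicalSpace Z] [T2Space Z]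
    (E : DPG X Y Z) :
    ∀ θ : ℝ, 0 < θ → θ < 1 → ∀ q : ℝ≥0∞, 1 ≤ q → ∀ z : Z, E.memDdot θ q z →
      lqNorm q haarScale (fun t : ℝ =>
          ENNReal.ofReal (t ^ (-θ)) *
              (∫⁻ s in Set.Ioc (0:ℝ) t, (‖s • E.AdotSG z s‖₊ : ℝ≥0∞) ∂haarScale)
            + ENNReal.ofReal (t ^ (1 - θ)) * (‖E.AdotSG z t‖₊ : ℝ≥0∞))
        ≤ ENNReal.ofReal ((1 + θ) / θ) * E.homNorm θ q z := by
  intro θ hθ _ q hq z ⟨_, hmeas, _⟩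
  set G : ℝ → ℝ≥0∞ := fun t => ‖t ^ (1 - θ) • E.AdotSG z t‖ₑ
  have hG : AEMeasurable G haarScale := hmeas.enorm
  have hlhs : (fun t : ℝ => ENNReal.ofReal (t ^ (-θ)) *
        (∫⁻ s in Ioc 0 t, (‖s • E.AdotSG z s‖₊ : ℝ≥0∞) ∂haarScale)
          + ENNReal.ofReal (t ^ (1 - θ)) * (‖E.AdotSG z t‖₊ : ℝ≥0∞))
      =ᵐ[haarScale] hardyOperator θ G + G := by
    filter_upwards [ae_haarScale_pos] with t ht
    simp only [← enorm_eq_nnnorm]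
    rw [setLIntegral_congr_fun measurableSet_Ioc
        fun s hs => enorm_smul_eq_rpow_mul hs.1 θ (E.AdotSG z s),
      Pi.add_apply, show G t = ‖t ^ (1 - θ) • E.AdotSG z t‖ₑ from rfl, enorm_smul,
      Real.enorm_eq_ofReal (Real.rpow_nonneg ht.le _)]
    rfl
  rw [lqNorm_eq_eLpNorm (zero_lt_one.trans_le hq).ne', eLpNorm_congr_ae hlhs, homNorm,
    ← eLpNorm_enorm]
  calc eLpNorm (hardyOperator θ G + G) q haarScale
      ≤ eLpNorm (hardyOperator θ G) q haarScale + eLpNorm G q haarScale :=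
        eLpNorm_add_le (measurable_hardyOperator θ G).aestronglyMeasurable
          hG.aestronglyMeasurable hq
    _ ≤ ENNReal.ofReal θ⁻¹ * eLpNorm G q haarScale + eLpNorm G q haarScale := by
        gcongr
        exact eLpNorm_hardyOperator_le hθ hq hG
    _ = ENNReal.ofReal ((1 + θ) / θ) * eLpNorm G q haarScale := by
        rw [add_div, div_self hθ.ne', one_div, ENNReal.ofReal_add (by positivity) zero_le_one,
          ENNReal.ofReal_one, add_mul, one_mul]

end DPG
end
end

section
/- Extension of the semigroup to the homogeneous sum space: for every t > 0, the formula e^{−tA}(x + y) := e^{−tA}x + y − ∫₀ᵗ e^{−sA} Ȧ y ds defines a well-defined map on X + D(Ȧ), i.e. if x₁ + y₁ = x₂ + y₂ with x₁, x₂ ∈ X and y₁, y₂ ∈ D(Ȧ), then e^{−tA}x₁ + y₁ − ∫₀ᵗ e^{−sA}Ȧy₁ ds = e^{−tA}x₂ + y₂ − ∫₀ᵗ e^{−sA}Ȧy₂ ds. Moreover, for all t > 0, x ∈ X and y ∈ D(Ȧ), one has e^{−tA}(x + y) ∈ D(Ȧ) and Ȧ e^{−tA}(x + y) = A e^{−tA}x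 + e^{−tA} Ȧ y. -/
open MeasureTheory Filter Topology Set
open scoped ENNReal NNReal

attribute [local instance] Classical.propDecidable

noncomputable section

namespace DPG

variable {X Y Z : Type*} [NormedAddCommGroup X] [NormedSpace ℂ X] [CompleteSpace X]
  [NormedAddCommGroup Y] [NormedSpace ℂ Y]
  [AddCommGroup Z] [Module ℂ Z] [TopologicalSpace Z] [T2Space Z]
  (E : DPG X Y Z)

/-! ### Auxiliary lemmas -/

lemma aop_sub_norm (a b : E.dom) : ‖E.Aop a - E.Aop b‖ ≤ E.C₁⁻¹ * ‖E.jY a - E.jY b‖ := by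
  rw [← map_sub, ← map_sub]
  have h := E.normY_lower (a - b)
  rw [inv_mul_eq_div, le_div_iff₀ E.C₁_pos]
  linarith

lemma cauchy_aop {u : ℕ → E.dom} (h : CauchySeq fun n => E.jY (u n)) :
    CauchySeq fun n => E.Aop (u n) := by
  rw [Metric.cauchySeq_iff] at h ⊢
  intro ε hε
  obtain ⟨N, hN⟩ := h (E.C₁ * ε) (mul_pos E.C₁_pos hε)
  refine ⟨N, fun m hm n hn => ?_⟩
  have h1 := hN m hm n hn
  rw [dist_eq_norm] at h1 ⊢
  calc ‖E.Aop (u m) - E.Aop (u n)‖ ≤ E.C₁⁻¹ * ‖E.jY (u m) - E.jY (u n)‖ :=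
        E.aop_sub_norm (u m) (u n)
    _ < E.C₁⁻¹ * (E.C₁ * ε) := by
        exact mul_lt_mul_of_pos_left h1 (inv_pos.mpr E.C₁_pos)
    _ = ε := inv_mul_cancel_left₀ E.C₁_pos.ne' ε

lemma lim_unique {y : Y} {u u' : ℕ → E.dom} {L L' : X}
    (hu : Tendsto (fun n => E.jY (u n)) atTop (𝓝 y))
    (hu' : Tendsto (fun n => E.jY (u' n)) atTop (𝓝 y))
    (hL : Tendsto (fun n => E.Aop (u n)) atTop (𝓝 L))
    (hL' : Tendsto (fun n => E.Aop (u' n)) atTop (𝓝 L')) : L = L' := by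
  have hdiff : Tendsto (fun n => E.jY (u n) - E.jY (u' n)) atTop (𝓝 0) := by
    simpa using hu.sub hu'
  have h0 : Tendsto (fun n => E.C₁⁻¹ * ‖E.jY (u n) - E.jY (u' n)‖) atTop (𝓝 0) := by
    simpa using hdiff.norm.const_mul E.C₁⁻¹
  have hnorm : Tendsto (fun n => ‖E.Aop (u n) - E.Aop (u' n)‖) atTop (𝓝 0) :=
    squeeze_zero (fun n => norm_nonneg _) (fun n => E.aop_sub_norm _ _) h0
  have hz : Tendsto (fun n => E.Aop (u n) - E.Aop (u' n)) atTop (𝓝 0) :=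
    tendsto_zero_iff_norm_tendsto_zero.mpr hnorm
  have := tendsto_nhds_unique (hL.sub hL') hz
  exact sub_eq_zero.mp this

lemma adot_tendsto {y : Y} {u : ℕ → E.dom}
    (hu : Tendsto (fun n => E.jY (u n)) atTop (𝓝 y)) :
    Tendsto (fun n => E.Aop (u n)) atTop (𝓝 (E.Adot y)) := by
  obtain ⟨L, hL⟩ := cauchySeq_tendsto_of_complete (E.cauchy_aop hu.cauchySeq)
  have hP : ∃ L' : X, ∃ u' : ℕ → E.dom,
      Tendsto (fun n => E.jY (u' n)) atTop (𝓝 y) ∧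
      Tendsto (fun n => E.Aop (u' n)) atTop (𝓝 L') := ⟨L, u, hu, hL⟩
  obtain ⟨u', hu', hA'⟩ :
      ∃ u' : ℕ → E.dom, Tendsto (fun n => E.jY (u' n)) atTop (𝓝 y) ∧
        Tendsto (fun n => E.Aop (u' n)) atTop (𝓝 (E.Adot y)) :=
    Classical.epsilon_spec hP
  have : L = E.Adot y := E.lim_unique hu hu' hL hA'
  exact this ▸ hL

lemma mem_DdotA_jY (d : E.dom) : E.jY d ∈ E.DdotA :=
  ⟨fun _ => d, tendsto_const_nhds⟩

lemma adot_jY (d : E.dom) : E.Adot (E.jY d) = E.Aop d :=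
  tendsto_nhds_unique (E.adot_tendsto (u := fun _ => d) tendsto_const_nhds)
    tendsto_const_nhds

lemma DdotA_add {y₁ y₂ : Y} (h₁ : y₁ ∈ E.DdotA) (h₂ : y₂ ∈ E.DdotA) :
    y₁ + y₂ ∈ E.DdotA := by
  obtain ⟨u, hu⟩ := h₁; obtain ⟨v, hv⟩ := h₂
  exact ⟨fun n => u n + v n, by simpa [map_add] using hu.add hv⟩

lemma DdotA_sub {y₁ y₂ : Y} (h₁ : y₁ ∈ E.DdotA) (h₂ : y₂ ∈ E.DdotA) :
    y₁ - y₂ ∈ E.DdotA := by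
  obtain ⟨u, hu⟩ := h₁; obtain ⟨v, hv⟩ := h₂
  exact ⟨fun n => u n - v n, by simpa [map_sub] using hu.sub hv⟩

lemma adot_add {y₁ y₂ : Y} (h₁ : y₁ ∈ E.DdotA) (h₂ : y₂ ∈ E.DdotA) :
    E.Adot (y₁ + y₂) = E.Adot y₁ + E.Adot y₂ := by
  obtain ⟨u, hu⟩ := h₁; obtain ⟨v, hv⟩ := h₂
  have h1 := (E.adot_tendsto hu).add (E.adot_tendsto hv)
  have h2 := E.adot_tendsto (u := fun n => u n + v n)
    (by simpa [map_add] using hu.add hv)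
  simp only [map_add] at h2
  exact tendsto_nhds_unique h2 h1

lemma adot_sub {y₁ y₂ : Y} (h₁ : y₁ ∈ E.DdotA) (h₂ : y₂ ∈ E.DdotA) :
    E.Adot (y₁ - y₂) = E.Adot y₁ - E.Adot y₂ := by
  obtain ⟨u, hu⟩ := h₁; obtain ⟨v, hv⟩ := h₂
  have h1 := (E.adot_tendsto hu).sub (E.adot_tendsto hv)
  have h2 := E.adot_tendsto (u := fun n => u n - v n)
    (by simpa [map_sub] using hu.sub hv)
  simp only [map_sub] at h2
  exact tendsto_nhds_unique h2 h1

lemma integrableOn_S (v : X) (t : ℝ) :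
    MeasureTheory.IntegrableOn (fun s => E.S s v) (Set.Ioc (0:ℝ) t) volume := by
  rcases le_or_gt t 0 with ht | ht
  · rw [Set.Ioc_eq_empty (by linarith)]
    exact MeasureTheory.integrableOn_empty
  · have hc : ContinuousOn (fun s => E.S s v) (Set.Icc (0:ℝ) t) :=
      (E.S_strong_cont v).mono (fun s hs => hs.1)
    exact (hc.integrableOn_Icc).mono_set Set.Ioc_subset_Icc_self

end DPG

namespace DPG

/-- the formula `e^{−tA}(x+y) = e^{−tA}x + y − ∫₀ᵗ e^{−sA}Ȧy ds` is
independent of the decomposition, and `e^{−tA}(x+y) ∈ D(Ȧ)` with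
`Ȧ e^{−tA}(x+y) = A e^{−tA}x + e^{−tA}Ȧy`. -/
theorem extended_semigroup_well_defined
    {X Y Z : Type*} [NormedAddCommGroup X] [NormedSpace ℂ X] [CompleteSpace X]
    [NormedAddCommGroup Y] [NormedSpace ℂ Y]
    [AddCommGroup Z] [Module ℂ Z] [TopologicalSpace Z] [T2Space Z]
    (E : DPG X Y Z) :
    ∀ t : ℝ, 0 < t →
      (∀ (x₁ x₂ : X) (y₁ y₂ : Y), y₁ ∈ E.DdotA → y₂ ∈ E.DdotA →
        E.ιX x₁ + E.ιY y₁ = E.ιX x₂ + E.ιY y₂ →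
        E.ιX (E.S t x₁ - ∫ s in Set.Ioc (0:ℝ) t, E.S s (E.Adot y₁)) + E.ιY y₁ =
          E.ιX (E.S t x₂ - ∫ s in Set.Ioc (0:ℝ) t, E.S s (E.Adot y₂)) + E.ιY y₂) ∧
      (∀ (x : X) (y : Y), y ∈ E.DdotA →
        ∃ w ∈ E.DdotA,
          E.ιY w = E.ιX (E.S t x - ∫ s in Set.Ioc (0:ℝ) t, E.S s (E.Adot y)) + E.ιY y ∧
          E.Adot w = E.Afun (E.S t x) + E.S t (E.Adot y)) := by
  intro t ht
  constructor
  · intro x₁ x₂ y₁ y₂ hy₁ hy₂ heq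
    -- the difference y₂ - y₁ corresponds to x₁ - x₂ in X
    have hιeq : E.ιX (x₁ - x₂) = E.ιY (y₂ - y₁) := by
      rw [map_sub, map_sub, sub_eq_sub_iff_add_eq_add, heq, add_comm]
    have hmem : y₂ - y₁ ∈ E.DdotA := E.DdotA_sub hy₂ hy₁
    have hd : x₁ - x₂ ∈ E.dom := E.inter_sub _ _ hmem hιeq
    set d : E.dom := ⟨x₁ - x₂, hd⟩ with hdef
    have hjY : E.jY d = y₂ - y₁ := by
      apply E.ιY_inj
      rw [← E.j_compat d]
      exact hιeq
    have hA : E.Aop d = E.Adot y₂ - E.Adot y₁ := by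
      rw [← E.adot_jY d, hjY, E.adot_sub hy₂ hy₁]
    -- key semigroup identity: S t d + ∫ S s (A d) = d
    have hgen := E.gen_eq_dom d t ht.le
    -- split the integral
    have hint : (∫ s in Set.Ioc (0:ℝ) t, E.S s (E.Adot y₂)) -
        (∫ s in Set.Ioc (0:ℝ) t, E.S s (E.Adot y₁)) =
        ∫ s in Set.Ioc (0:ℝ) t, E.S s (E.Aop d) := by
      rw [← MeasureTheory.integral_sub (E.integrableOn_S _ t) (E.integrableOn_S _ t)]
      congr 1
      funext s
      rw [hA, map_sub]
    -- the X-side identity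
    have hXeq : (E.S t x₁ - ∫ s in Set.Ioc (0:ℝ) t, E.S s (E.Adot y₁)) -
        (E.S t x₂ - ∫ s in Set.Ioc (0:ℝ) t, E.S s (E.Adot y₂)) = x₁ - x₂ := by
      have hS : E.S t x₁ - E.S t x₂ = E.S t (d : X) := by
        simp [hdef, map_sub]
      have : (E.S t x₁ - ∫ s in Set.Ioc (0:ℝ) t, E.S s (E.Adot y₁)) -
          (E.S t x₂ - ∫ s in Set.Ioc (0:ℝ) t, E.S s (E.Adot y₂)) =
          (E.S t x₁ - E.S t x₂) +
            ((∫ s in Set.Ioc (0:ℝ) t, E.S s (E.Adot y₂)) -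
              ∫ s in Set.Ioc (0:ℝ) t, E.S s (E.Adot y₁)) := by abel
      rw [this, hS, hint]
      have hdX : (d : X) = x₁ - x₂ := rfl
      rw [← hdX]
      have h2 : (∫ s in Set.Ioc (0:ℝ) t, E.S s (E.Aop d)) = (d : X) - E.S t (d : X) := by
        have := congrArg Neg.neg hgen
        simpa [neg_sub] using this.symm
      rw [h2]; abel
    have hfin : E.ιX (E.S t x₁ - ∫ s in Set.Ioc (0:ℝ) t, E.S s (E.Adot y₁)) -
        E.ιX (E.S t x₂ - ∫ s in Set.Ioc (0:ℝ) t, E.S s (E.Adot y₂)) =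
        E.ιY y₂ - E.ιY y₁ := by
      rw [← map_sub, hXeq, hιeq, map_sub]
    rw [sub_eq_sub_iff_add_eq_add] at hfin
    rw [hfin, add_comm]
  · intro x y hy
    have m1 : E.S t x ∈ E.dom := E.S_smoothing t ht x
    set v := E.Adot y with hv
    have m2 : (∫ s in Set.Ioc (0:ℝ) t, E.S s v) ∈ E.dom := E.int_mem v t
    set d : E.dom := ⟨E.S t x - ∫ s in Set.Ioc (0:ℝ) t, E.S s v, E.dom.sub_mem m1 m2⟩
      with hddef
    refine ⟨E.jY d + y, E.DdotA_add (E.mem_DdotA_jY d) hy, ?_, ?_⟩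
    · rw [map_add, ← E.j_compat d]
    · rw [E.adot_add (E.mem_DdotA_jY d) hy, E.adot_jY d, ← hv]
      have hsplit : E.Aop d =
          E.Aop ⟨E.S t x, m1⟩ - E.Aop ⟨∫ s in Set.Ioc (0:ℝ) t, E.S s v, m2⟩ := by
        rw [← map_sub]
        congr 1
      have hAfun : E.Afun (E.S t x) = E.Aop ⟨E.S t x, m1⟩ := dif_pos m1
      rw [hsplit, E.gen_eq v t ht.le, hAfun]
      abel

end DPG
end
end

section
/- Injectivity of the extended semigroup family composed with the homogeneous operator: if z ∈ X + D(Ȧ) satisfies Ȧ e^{−tA} z = 0 for all t > 0, then z = 0. -/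
open MeasureTheory Filter Topology Set
open scoped ENNReal NNReal

attribute [local instance] Classical.propDecidable

noncomputable section

/-!
For `t > 0` the element `e^{−tA}z` lies in `D(Ȧ)`, and on `D(Ȧ)` the bound `‖y‖_Y ≤ C₂‖Ȧy‖`
passes to the limit, so `Ȧe^{−tA}z = 0` forces `e^{−tA}z = 0`. Writing `z = x + y`, this says
that `e^{−tA}x − ∫₀ᵗ e^{−sA}Ȧy ds = −y` for every `t > 0`. The left side is an `X`-valued
function of `t` which tends to `x` as `t → 0⁺`, so `x = −y` and `z = 0`.
-/

theorem tendsto_setIntegral_Ioc_zero_nhdsGT_zero {F : Type*} [NormedAddCommGroup F]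
    [NormedSpace ℝ F] {f : ℝ → F} {C : ℝ} (hf : ∀ s, 0 < s → ‖f s‖ ≤ C) :
    Tendsto (fun t => ∫ s in Ioc (0 : ℝ) t, f s) (𝓝[>] 0) (𝓝 0) := by
  have hCt : Tendsto (fun t : ℝ => C * t) (𝓝[>] 0) (𝓝 0) := by
    simpa using tendsto_nhdsWithin_of_tendsto_nhds ((continuous_const_mul C).tendsto 0)
  refine squeeze_zero_norm' ?_ hCt
  filter_upwards [self_mem_nhdsWithin] with t (ht : 0 < t)
  calc ‖∫ s in Ioc (0 : ℝ) t, f s‖ ≤ C * volume.real (Ioc (0 : ℝ) t) :=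
        norm_setIntegral_le_of_norm_le_const measure_Ioc_lt_top fun s hs => hf s hs.1
    _ = C * t := by simp [ht.le]

namespace DPG

section

variable {X Y Z : Type*} [NormedAddCommGroup X] [NormedSpace ℂ X] [CompleteSpace X]
  [NormedAddCommGroup Y] [NormedSpace ℂ Y]
  [AddCommGroup Z] [Module ℂ Z] [TopologicalSpace Z] [T2Space Z]
  (E : DPG X Y Z)

theorem cauchySeq_Aop_of_cauchySeq_jY {u : ℕ → E.dom} (hu : CauchySeq fun n => E.jY (u n)) :
    CauchySeq fun n => E.Aop (u n) := by
  rw [Metric.cauchySeq_iff] at hu ⊢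
  intro ε hε
  obtain ⟨N, hN⟩ := hu (E.C₁ * ε) (mul_pos E.C₁_pos hε)
  refine ⟨N, fun m hm n hn => lt_of_mul_lt_mul_left ?_ E.C₁_pos.le⟩
  calc E.C₁ * dist (E.Aop (u m)) (E.Aop (u n)) ≤ dist (E.jY (u m)) (E.jY (u n)) := by
        simpa only [dist_eq_norm, map_sub] using E.normY_lower (u m - u n)
    _ < E.C₁ * ε := hN m hm n hn

theorem exists_tendsto_Adot {y : Y} (hy : y ∈ E.DdotA) :
    ∃ u : ℕ → E.dom, Tendsto (fun n => E.jY (u n)) atTop (𝓝 y) ∧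
      Tendsto (fun n => E.Aop (u n)) atTop (𝓝 (E.Adot y)) := by
  obtain ⟨u, hu⟩ := hy
  obtain ⟨L, hL⟩ := cauchySeq_tendsto_of_complete (E.cauchySeq_Aop_of_cauchySeq_jY hu.cauchySeq)
  exact Classical.epsilon_spec (p := fun L => ∃ u : ℕ → E.dom,
    Tendsto (fun n => E.jY (u n)) atTop (𝓝 y) ∧ Tendsto (fun n => E.Aop (u n)) atTop (𝓝 L))
    ⟨L, u, hu, hL⟩

theorem eq_zero_of_Adot_eq_zero {y : Y} (hy : y ∈ E.DdotA) (h : E.Adot y = 0) : y = 0 := by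
  obtain ⟨u, hjY, hA⟩ := E.exists_tendsto_Adot hy
  rw [h] at hA
  have hjY_zero : Tendsto (fun n => E.jY (u n)) atTop (𝓝 0) := by
    refine squeeze_zero_norm (fun n => E.normY_upper (u n)) ?_
    simpa using (tendsto_zero_iff_norm_tendsto_zero.mp hA).const_mul E.C₂
  exact tendsto_nhds_unique hjY hjY_zero

theorem eq_zero_of_AdotZ_eq_zero {z : Z} (hz : z ∈ E.ιY '' E.DdotA) (h : E.AdotZ z = 0) :
    z = 0 := by
  have hz' : ∃ y ∈ E.DdotA, E.ιY y = z := hz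
  rw [AdotZ, dif_pos hz'] at h
  rw [← hz.choose_spec.2, E.eq_zero_of_Adot_eq_zero hz.choose_spec.1 h, map_zero]

theorem decomp_spec {z : Z} (hz : z ∈ E.sumSpace) :
    E.decompY z ∈ E.DdotA ∧ z = E.ιX (E.decompX z) + E.ιY (E.decompY z) := by
  have hz' : ∃ (x : X) (y : Y), y ∈ E.DdotA ∧ z = E.ιX x + E.ιY y := hz
  rw [decompX, decompY, dif_pos hz', dif_pos hz']
  exact hz.choose_spec.choose_spec

theorem jY_add_mem_DdotA (w : E.dom) {y : Y} (hy : y ∈ E.DdotA) : E.jY w + y ∈ E.DdotA := by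
  obtain ⟨u, hu⟩ := hy
  exact ⟨fun n => w + u n, by simpa only [map_add] using tendsto_const_nhds.add hu⟩

theorem SGext_mem_image_DdotA {z : Z} (hz : z ∈ E.sumSpace) {t : ℝ} (ht : 0 < t) :
    E.SGext t z ∈ E.ιY '' E.DdotA := by
  obtain ⟨hy, -⟩ := E.decomp_spec hz
  let w : E.dom := ⟨_, E.dom.sub_mem (E.S_smoothing t ht (E.decompX z))
    (E.int_mem (E.Adot (E.decompY z)) t)⟩
  exact ⟨E.jY w + E.decompY z, E.jY_add_mem_DdotA w hy, by rw [map_add, ← E.j_compat]; rfl⟩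

theorem tendsto_S_sub_setIntegral (x a : X) :
    Tendsto (fun t => E.S t x - ∫ s in Ioc (0 : ℝ) t, E.S s a) (𝓝[>] 0) (𝓝 x) := by
  have hS : Tendsto (fun t => E.S t x) (𝓝[>] 0) (𝓝 x) := by
    have h := E.S_strong_cont x 0 self_mem_Ici
    rw [ContinuousWithinAt, E.S_zero] at h
    exact h.mono_left (nhdsWithin_mono _ Ioi_subset_Ici_self)
  have hint := tendsto_setIntegral_Ioc_zero_nhdsGT_zero (f := fun s => E.S s a) fun s hs =>
    ((E.S s).le_opNorm a).trans (mul_le_mul_of_nonneg_right (E.S_bdd s hs.le) (norm_nonneg a))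
  simpa using hS.sub hint

end

/-- if `z ∈ X + D(Ȧ)` satisfies `Ȧ e^{−tA} z = 0` for all `t > 0`,
then `z = 0`. -/
theorem extended_semigroup_injective
    {X Y Z : Type*} [NormedAddCommGroup X] [NormedSpace ℂ X] [CompleteSpace X]
    [NormedAddCommGroup Y] [NormedSpace ℂ Y]
    [AddCommGroup Z] [Module ℂ Z] [TopologicalSpace Z] [T2Space Z]
    (E : DPG X Y Z) :
    ∀ z ∈ E.sumSpace, (∀ t : ℝ, 0 < t → E.AdotSG z t = 0) → z = 0 := by
  intro z hz hzero
  obtain ⟨-, hdecomp⟩ := E.decomp_spec hz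
  set f := fun t => E.S t (E.decompX z) - ∫ s in Ioc (0 : ℝ) t, E.S s (E.Adot (E.decompY z))
  have hSG : ∀ t, 0 < t → E.ιX (f t) = -E.ιY (E.decompY z) := fun t ht =>
    eq_neg_of_add_eq_zero_left
      (E.eq_zero_of_AdotZ_eq_zero (E.SGext_mem_image_DdotA hz ht) (hzero t ht))
  have hconst : ∀ t, 0 < t → f 1 = f t := fun t ht =>
    E.ιX_inj ((hSG 1 one_pos).trans (hSG t ht).symm)
  have hf1 : f 1 = E.decompX z :=
    tendsto_nhds_unique
      (tendsto_const_nhds.congr' (eventually_nhdsWithin_of_forall (s := Ioi 0) hconst))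
      (E.tendsto_S_sub_setIntegral _ _)
  rw [hdecomp, ← hf1, hSG 1 one_pos, neg_add_cancel]

end DPG
end
end

section
/- Algebraic ellipticity (Gårding) inequality for the Lamé coefficients: let n ≥ 1 be an integer and let μ′, λ be real numbers with μ′ ≥ 0 and 2μ′ + nλ ≥ 0. Then for every complex n×n matrix A one has μ′ Σ_{i,α=1}^n |A_{iα}|² + μ′ Re( Σ_{i,α=1}^n A_{αi} · conj(A_{iα}) ) + λ |Σ_{i=1}^n A_{ii}|² ≥ 0. -/
/-!
Symmetrizing, `Σ |A_{iα}|² + Re Σ A_{αi} conj A_{iα} = ½ Σ |A_{iα} + A_{αi}|²`, which is at least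
`2 Σ |A_{ii}|²` (keep only the diagonal terms), while `|Σ A_{ii}|² ≤ n Σ |A_{ii}|²` by
Cauchy–Schwarz. For `λ ≥ 0` every term is then nonnegative; for `λ < 0` the whole expression is
at least `(2μ′ + nλ) Σ |A_{ii}|² ≥ 0`.
-/

open Finset RCLike ComplexConjugate

theorem norm_sum_sq_le_card_mul_sum_norm_sq {ι E : Type*} [SeminormedAddCommGroup E]
    (s : Finset ι) (f : ι → E) : ‖∑ i ∈ s, f i‖ ^ 2 ≤ #s * ∑ i ∈ s, ‖f i‖ ^ 2 :=
  (pow_le_pow_left₀ (norm_nonneg _) (norm_sum_le s f) 2).trans sq_sum_le_card_mul_sum_sq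

theorem Finset.sum_diag_le_sum_sum {ι M : Type*} [AddCommMonoid M] [PartialOrder M]
    [IsOrderedAddMonoid M] (s : Finset ι) {f : ι → ι → M} (hf : ∀ i ∈ s, ∀ j ∈ s, 0 ≤ f i j) :
    ∑ i ∈ s, f i i ≤ ∑ i ∈ s, ∑ j ∈ s, f i j :=
  sum_le_sum fun i hi => single_le_sum (hf i hi) hi

section

variable {𝕜 ι : Type*} [RCLike 𝕜] [Fintype ι]

theorem sum_norm_add_transpose_sq (A : Matrix ι ι 𝕜) :
    ∑ i, ∑ j, ‖A i j + A j i‖ ^ 2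
      = 2 * (∑ i, ∑ j, ‖A i j‖ ^ 2 + re (∑ i, ∑ j, A j i * conj (A i j))) := by
  have hpoint (i j : ι) : ‖A i j + A j i‖ ^ 2
      = ‖A i j‖ ^ 2 + ‖A j i‖ ^ 2 + 2 * re (A j i * conj (A i j)) := by
    rw [add_comm, ← normSq_eq_def', normSq_add, normSq_eq_def', normSq_eq_def']
    ring
  have hswap : ∑ i, ∑ j, ‖A j i‖ ^ 2 = ∑ i, ∑ j, ‖A i j‖ ^ 2 := sum_comm
  simp only [hpoint, sum_add_distrib, hswap, map_sum, ← mul_sum]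
  ring

theorem two_mul_sum_norm_diag_sq_le (A : Matrix ι ι 𝕜) :
    2 * ∑ i, ‖A i i‖ ^ 2 ≤ ∑ i, ∑ j, ‖A i j‖ ^ 2 + re (∑ i, ∑ j, A j i * conj (A i j)) := by
  have hdiag : ∑ i, ‖A i i + A i i‖ ^ 2 = 4 * ∑ i, ‖A i i‖ ^ 2 := by
    simp only [← two_mul, norm_mul, mul_pow, mul_sum, RCLike.norm_two]
    norm_num
  have := sum_diag_le_sum_sum univ fun i _ j _ => sq_nonneg ‖A i j + A j i‖
  rw [hdiag, sum_norm_add_transpose_sq] at this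
  linarith

end

theorem lame_garding_pointwise_general
    (n : ℕ) (μ' lam : ℝ) (hμ' : 0 ≤ μ') (hell : 0 ≤ 2 * μ' + n * lam)
    (A : Matrix (Fin n) (Fin n) ℂ) :
    0 ≤ μ' * ∑ i : Fin n, ∑ α : Fin n, ‖A i α‖ ^ 2
        + μ' * (∑ i : Fin n, ∑ α : Fin n, A α i * (starRingEnd ℂ) (A i α)).re
        + lam * ‖∑ i : Fin n, A i i‖ ^ 2 := by
  set d := ∑ i, ‖A i i‖ ^ 2
  have hdiag : 2 * d ≤ ∑ i, ∑ α, ‖A i α‖ ^ 2 + (∑ i, ∑ α, A α i * conj (A i α)).re :=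
    two_mul_sum_norm_diag_sq_le A
  have htrace : ‖∑ i, A i i‖ ^ 2 ≤ n * d := by
    simpa using norm_sum_sq_le_card_mul_sum_norm_sq univ fun i => A i i
  have hd : 0 ≤ d := by positivity
  have hμd := mul_le_mul_of_nonneg_left hdiag hμ'
  rcases le_or_gt 0 lam with hlam | hlam
  · nlinarith [mul_nonneg hlam (sq_nonneg ‖∑ i, A i i‖)]
  · nlinarith [mul_le_mul_of_nonpos_left htrace hlam.le, mul_nonneg hell hd]

/-- algebraic ellipticity (Gårding) inequality for the Lamé coefficients:
if `μ′ ≥ 0` and `2μ′ + nλ ≥ 0`, then for every complex `n×n` matrix `A`,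
`μ′ Σ|A_{iα}|² + μ′ Re(Σ A_{αi} conj(A_{iα})) + λ |Σ A_{ii}|² ≥ 0`. -/
theorem lame_garding_pointwise
    (n : ℕ) (hn : 1 ≤ n) (μ' lam : ℝ) (hμ' : 0 ≤ μ') (hell : 0 ≤ 2 * μ' + n * lam)
    (A : Matrix (Fin n) (Fin n) ℂ) :
    0 ≤ μ' * ∑ i : Fin n, ∑ α : Fin n, ‖A i α‖ ^ 2
        + μ' * (∑ i : Fin n, ∑ α : Fin n, A α i * (starRingEnd ℂ) (A i α)).re
        + lam * ‖∑ i : Fin n, A i i‖ ^ 2 :=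
  lame_garding_pointwise_general n μ' lam hμ' hell A
end

section
/- Nondegeneracy and two-sided bounds for the Lopatinskii determinant of the Lamé system in the half-plane: let μ > 0 and λ ∈ ℝ with λ + μ > 0, and set ν := λ + 2μ. For (τ, ξ₁) ∈ ℝ², let λ₁ := √(iτ/ν + ξ₁²) and λ₂ := √(iτ/μ + ξ₁²) (square roots with nonnegative real part), and define det𝒜(τ, ξ₁) := (iτ + 2μξ₁²)² − 4μ²ξ₁²λ₁λ₂. Then det𝒜(τ, ξ₁) = 0 if and only if τ = 0, and there exist real constants 0 < c < C (depending only on μ, λ) such that for all (τ, ξ₁) ∈ ℝ², c |τ| √(τ² + μ²ξ₁⁴) ≤ |det𝒜(τ, ξ₁)| ≤ C (τ² + μ²ξ₁⁴). -/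
/-!
Multiplying `det𝒜` by its partner `P² + 4μ²ξ₁²λ₁λ₂`, where `P = iτ + 2μξ₁²`, removes the square
roots: since `λ₁² = iτ/ν + ξ₁²` and `λ₂² = iτ/μ + ξ₁²`, the product is `iτ · q(iτ)` for a cubic
`q`, homogeneous of degree three in `(ξ₁², τ)`. When `λ + μ > 0` the cubic has no nontrivial real
zeros, so compactness of the unit circle gives `|q| ≥ m (τ² + μ²ξ₁⁴)^{3/2}`. Both factors are
`O(τ² + μ²ξ₁⁴)` whatever branch of the roots is taken, and dividing by the partner gives the lower
bound.
-/

noncomputable section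

/-- The principal square root `√w` with nonnegative real part (and `√0 = 0`),
realized as the principal power `w^{1/2}`. -/
def csqrt (w : ℂ) : ℂ := w ^ ((1:ℂ)/2)

/-- The Lopatinskii determinant of the Lamé system in the half-plane:
`det𝒜(τ,ξ₁) = (iτ + 2μξ₁²)² − 4μ²ξ₁²λ₁λ₂` where `λ₁ = √(iτ/ν + ξ₁²)`,
`λ₂ = √(iτ/μ + ξ₁²)` and `ν = λ + 2μ`. -/
def lameDet (μ lam : ℝ) (τ ξ : ℝ) : ℂ :=
  (Complex.I * (τ:ℂ) + 2 * (μ:ℂ) * (ξ:ℂ)^2)^2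
    - 4 * (μ:ℂ)^2 * (ξ:ℂ)^2
        * csqrt (Complex.I * (τ:ℂ) / ((lam:ℂ) + 2 * (μ:ℂ)) + (ξ:ℂ)^2)
        * csqrt (Complex.I * (τ:ℂ) / (μ:ℂ) + (ξ:ℂ)^2)

open Complex

theorem exists_pos_mul_norm_pow_le_of_homogeneous {E : Type*} [NormedAddCommGroup E]
    [NormedSpace ℝ E] [ProperSpace E] [Nontrivial E] {f : E → ℝ} {k : ℕ} (hk : k ≠ 0)
    (hf : Continuous f) (hhom : ∀ (r : ℝ) (v : E), 0 < r → f (r • v) = r ^ k * f v)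
    (hpos : ∀ v, v ≠ 0 → 0 < f v) :
    ∃ m > 0, ∀ v, m * ‖v‖ ^ k ≤ f v := by
  obtain ⟨v₀, hv₀, hmin⟩ := (isCompact_sphere (0 : E) 1).exists_isMinOn
    (NormedSpace.sphere_nonempty.2 zero_le_one) hf.continuousOn
  have hv₀ne : v₀ ≠ 0 := ne_zero_of_mem_unit_sphere ⟨v₀, hv₀⟩
  refine ⟨f v₀, hpos v₀ hv₀ne, fun v => ?_⟩
  rcases eq_or_ne v 0 with rfl | hv
  · have h2 : (1 : ℝ) < 2 ^ k := one_lt_pow₀ one_lt_two hk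
    have := hhom 2 0 two_pos
    rw [smul_zero] at this
    rw [norm_zero, zero_pow hk, mul_zero]
    nlinarith
  · have hnorm : 0 < ‖v‖ := norm_pos_iff.2 hv
    have hu : ‖v‖⁻¹ • v ∈ Metric.sphere (0 : E) 1 := by
      rw [mem_sphere_zero_iff_norm, norm_smul, norm_inv, norm_norm, inv_mul_cancel₀ hnorm.ne']
    calc f v₀ * ‖v‖ ^ k ≤ f (‖v‖⁻¹ • v) * ‖v‖ ^ k := by gcongr; exact hmin hu
      _ = f v := by
        rw [hhom _ _ (inv_pos.2 hnorm), inv_pow, mul_comm, ← mul_assoc,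
          mul_inv_cancel₀ (by positivity), one_mul]

theorem csqrt_sq (w : ℂ) : csqrt w ^ 2 = w := by
  simp [csqrt, one_div]

theorem norm_csqrt_mul_csqrt_le {w₁ w₂ : ℂ} {r : ℝ} (h₁ : ‖w₁‖ ≤ r) (h₂ : ‖w₂‖ ≤ r) :
    ‖csqrt w₁ * csqrt w₂‖ ≤ r := by
  have hr : 0 ≤ r := (norm_nonneg _).trans h₁
  rw [← sq_le_sq₀ (norm_nonneg _) hr, ← norm_pow, mul_pow, csqrt_sq, csqrt_sq, norm_mul, sq]
  exact mul_le_mul h₁ h₂ (norm_nonneg _) hr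

section Lame

variable (μ lam : ℝ)

def lameSymbol (τ ξ : ℝ) : ℂ := I * τ + 2 * μ * ξ ^ 2

def lameCoupling (τ ξ : ℝ) : ℂ :=
  4 * μ ^ 2 * ξ ^ 2 * csqrt (I * τ / (lam + 2 * μ) + ξ ^ 2) * csqrt (I * τ / μ + ξ ^ 2)

def lameCubic (η : ℝ) (a : ℂ) : ℂ :=
  a ^ 3 + 8 * μ * η * a ^ 2 + 8 * μ ^ 2 * (3 * lam + 4 * μ) / (lam + 2 * μ) * η ^ 2 * a
    + 16 * μ ^ 3 * (lam + μ) / (lam + 2 * μ) * η ^ 3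

theorem lameDet_eq (τ ξ : ℝ) :
    lameDet μ lam τ ξ = lameSymbol μ τ ξ ^ 2 - lameCoupling μ lam τ ξ := rfl

variable {μ lam}

theorem lameDet_mul_eq (hμ : μ ≠ 0) (hν : lam + 2 * μ ≠ 0) (τ ξ : ℝ) :
    lameDet μ lam τ ξ * (lameSymbol μ τ ξ ^ 2 + lameCoupling μ lam τ ξ)
      = I * τ * lameCubic μ lam (ξ ^ 2) (I * τ) := by
  have hνc : (lam : ℂ) + 2 * μ ≠ 0 := by exact_mod_cast hν
  have hμc : (μ : ℂ) ≠ 0 := by exact_mod_cast hμ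
  have hcoupling : lameCoupling μ lam τ ξ ^ 2
      = 16 * μ ^ 4 * ξ ^ 4 * (I * τ / (lam + 2 * μ) + ξ ^ 2) * (I * τ / μ + ξ ^ 2) := by
    rw [lameCoupling, mul_pow, mul_pow, csqrt_sq, csqrt_sq]
    ring
  rw [lameDet_eq, mul_comm, ← sq_sub_sq, hcoupling, lameSymbol, lameCubic]
  push_cast
  field_simp
  ring

theorem lameCubic_smul (η r : ℝ) (a : ℂ) :
    lameCubic μ lam (r * η) (r * a) = r ^ 3 * lameCubic μ lam η a := by
  simp only [lameCubic]
  push_cast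
  ring

theorem mul_lameCubic_I_mul (hν : lam + 2 * μ ≠ 0) (η τ : ℝ) :
    (lam + 2 * μ) * lameCubic μ lam η (I * τ)
      = ⟨8 * μ * η * (2 * μ ^ 2 * (lam + μ) * η ^ 2 - (lam + 2 * μ) * τ ^ 2),
          τ * (8 * μ ^ 2 * (3 * lam + 4 * μ) * η ^ 2 - (lam + 2 * μ) * τ ^ 2)⟩ := by
  have hνc : (lam : ℂ) + 2 * μ ≠ 0 := by exact_mod_cast hν
  rw [mk_eq_add_mul_I, lameCubic]
  push_cast
  field_simp
  linear_combination (lam + 2 * μ) * (I * τ ^ 3 + 8 * μ * η * τ ^ 2) * I_sq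

theorem eq_zero_of_lameCubic_I_mul_eq_zero (hμ : 0 < μ) (hlam : 0 < lam + μ) {η τ : ℝ}
    (h : lameCubic μ lam η (I * τ) = 0) : η = 0 ∧ τ = 0 := by
  have hν : 0 < lam + 2 * μ := by linarith
  have hmk := mul_lameCubic_I_mul hν.ne' η τ
  rw [h, mul_zero, eq_comm] at hmk
  obtain ⟨hre, him⟩ := Complex.ext_iff.1 hmk
  dsimp only [zero_re, zero_im] at hre him
  have hη : η = 0 := by
    rcases mul_eq_zero.1 him with rfl | hτ
    · have : 16 * μ ^ 3 * (lam + μ) * η ^ 3 = 0 := by linear_combination hre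
      simpa [hμ.ne', hlam.ne'] using this
    · have h11 : 11 * lam + 15 * μ ≠ 0 := by linarith
      have : 16 * μ ^ 3 * (11 * lam + 15 * μ) * η ^ 3 = 0 := by
        linear_combination -hre + 8 * μ * η * hτ
      simpa [hμ.ne', h11] using this
  subst hη
  have : (lam + 2 * μ) * τ ^ 3 = 0 := by linear_combination -him
  simpa [hν.ne'] using this

theorem exists_pos_mul_sqrt_pow_le_norm_lameCubic (hμ : 0 < μ) (hlam : 0 < lam + μ) :
    ∃ m > 0, ∀ η τ : ℝ, m * √(τ ^ 2 + μ ^ 2 * η ^ 2) ^ 3 ≤ ‖lameCubic μ lam η (I * τ)‖ := by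
  have hcont : Continuous fun w : ℂ => ‖lameCubic μ lam (w.re / μ) (I * w.im)‖ := by
    simp only [lameCubic]
    fun_prop
  have hhom (r : ℝ) (w : ℂ) (hr : 0 < r) :
      ‖lameCubic μ lam ((r • w).re / μ) (I * (r • w).im)‖
        = r ^ 3 * ‖lameCubic μ lam (w.re / μ) (I * w.im)‖ := by
    rw [smul_re, smul_im, smul_eq_mul, smul_eq_mul, mul_div_assoc, ofReal_mul, mul_left_comm,
      lameCubic_smul, norm_mul, norm_pow, norm_real, Real.norm_of_nonneg hr.le]
  have hpos (w : ℂ) (hw : w ≠ 0) : 0 < ‖lameCubic μ lam (w.re / μ) (I * w.im)‖ := by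
    refine norm_pos_iff.2 fun h => hw ?_
    obtain ⟨hre, him⟩ := eq_zero_of_lameCubic_I_mul_eq_zero hμ hlam h
    exact Complex.ext (by simpa [hμ.ne'] using hre) him
  obtain ⟨m, hm, hbound⟩ := exists_pos_mul_norm_pow_le_of_homogeneous three_ne_zero hcont hhom hpos
  refine ⟨m, hm, fun η τ => ?_⟩
  have hw : ‖(μ * η : ℝ) + τ * I‖ = √(τ ^ 2 + μ ^ 2 * η ^ 2) := by
    rw [norm_add_mul_I, add_comm, mul_pow]
  have hη : ((μ * η : ℝ) + τ * I : ℂ).re / μ = η := by simp [hμ.ne']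
  have hτ : ((μ * η : ℝ) + τ * I : ℂ).im = τ := by simp
  simpa only [hw, hη, hτ] using hbound ((μ * η : ℝ) + τ * I)

theorem norm_I_mul_div_add_sq_le (hμ : 0 < μ) {c : ℝ} (hc : μ ≤ c) (τ ξ : ℝ) :
    ‖I * τ / c + ξ ^ 2‖ ≤ |τ| / μ + ξ ^ 2 := by
  calc ‖I * τ / c + ξ ^ 2‖ ≤ ‖I * τ / c‖ + ‖(ξ : ℂ) ^ 2‖ := norm_add_le _ _
    _ = |τ| / |c| + ξ ^ 2 := by simp
    _ ≤ |τ| / μ + ξ ^ 2 := by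
      rw [abs_of_pos (hμ.trans_le hc)]
      gcongr

theorem norm_lameCoupling_le (hμ : 0 < μ) (hlam : 0 < lam + μ) (τ ξ : ℝ) :
    ‖lameCoupling μ lam τ ξ‖ ≤ 4 * μ * |τ| * ξ ^ 2 + 4 * μ ^ 2 * ξ ^ 4 := by
  have h₁ := norm_I_mul_div_add_sq_le hμ (show μ ≤ lam + 2 * μ by linarith) τ ξ
  have h₂ := norm_I_mul_div_add_sq_le hμ le_rfl τ ξ
  push_cast at h₁
  calc ‖lameCoupling μ lam τ ξ‖
      = 4 * μ ^ 2 * ξ ^ 2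
          * ‖csqrt (I * τ / (lam + 2 * μ) + ξ ^ 2) * csqrt (I * τ / μ + ξ ^ 2)‖ := by
        rw [lameCoupling, mul_assoc, norm_mul]
        simp
    _ ≤ 4 * μ ^ 2 * ξ ^ 2 * (|τ| / μ + ξ ^ 2) := by
        gcongr
        exact norm_csqrt_mul_csqrt_le h₁ h₂
    _ = 4 * μ * |τ| * ξ ^ 2 + 4 * μ ^ 2 * ξ ^ 4 := by
        field_simp

theorem norm_lameSymbol_sq_add_norm_lameCoupling_le (hμ : 0 < μ) (hlam : 0 < lam + μ) (τ ξ : ℝ) :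
    ‖lameSymbol μ τ ξ ^ 2‖ + ‖lameCoupling μ lam τ ξ‖ ≤ 10 * (τ ^ 2 + μ ^ 2 * ξ ^ 4) := by
  have hsymbol : ‖lameSymbol μ τ ξ ^ 2‖ = τ ^ 2 + 4 * μ ^ 2 * ξ ^ 4 := by
    rw [norm_pow, show lameSymbol μ τ ξ = (2 * μ * ξ ^ 2 : ℝ) + τ * I by
      push_cast [lameSymbol]; ring, norm_add_mul_I, Real.sq_sqrt (by positivity)]
    ring
  have hamgm : 4 * μ * |τ| * ξ ^ 2 ≤ 2 * τ ^ 2 + 2 * μ ^ 2 * ξ ^ 4 := by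
    nlinarith [sq_nonneg (|τ| - μ * ξ ^ 2), sq_abs τ]
  linarith [norm_lameCoupling_le hμ hlam τ ξ, sq_nonneg τ]

theorem norm_lameDet_le (hμ : 0 < μ) (hlam : 0 < lam + μ) (τ ξ : ℝ) :
    ‖lameDet μ lam τ ξ‖ ≤ 10 * (τ ^ 2 + μ ^ 2 * ξ ^ 4) :=
  (norm_sub_le _ _).trans (norm_lameSymbol_sq_add_norm_lameCoupling_le hμ hlam τ ξ)

theorem norm_lameSymbol_sq_add_lameCoupling_le (hμ : 0 < μ) (hlam : 0 < lam + μ) (τ ξ : ℝ) :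
    ‖lameSymbol μ τ ξ ^ 2 + lameCoupling μ lam τ ξ‖ ≤ 10 * (τ ^ 2 + μ ^ 2 * ξ ^ 4) :=
  (norm_add_le _ _).trans (norm_lameSymbol_sq_add_norm_lameCoupling_le hμ hlam τ ξ)

theorem exists_pos_mul_abs_mul_sqrt_le_norm_lameDet (hμ : 0 < μ) (hlam : 0 < lam + μ) :
    ∃ c > 0, ∀ τ ξ : ℝ, c * |τ| * √(τ ^ 2 + μ ^ 2 * ξ ^ 4) ≤ ‖lameDet μ lam τ ξ‖ := by
  obtain ⟨m, hm, hcubic⟩ := exists_pos_mul_sqrt_pow_le_norm_lameCubic hμ hlam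
  refine ⟨m / 10, by positivity, fun τ ξ => ?_⟩
  set Q := τ ^ 2 + μ ^ 2 * ξ ^ 4
  rcases (show 0 ≤ Q by positivity).eq_or_lt with hQ | hQ
  · rw [← hQ, Real.sqrt_zero, mul_zero]
    exact norm_nonneg _
  refine le_of_mul_le_mul_right ?_ (show 0 < 10 * Q by positivity)
  calc m / 10 * |τ| * √Q * (10 * Q) = |τ| * (m * √(τ ^ 2 + μ ^ 2 * (ξ ^ 2) ^ 2) ^ 3) := by
        rw [← pow_mul, pow_succ, Real.sq_sqrt hQ.le]
        ring
    _ ≤ |τ| * ‖lameCubic μ lam (ξ ^ 2) (I * τ)‖ := by gcongr; exact hcubic _ _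
    _ = ‖lameDet μ lam τ ξ * (lameSymbol μ τ ξ ^ 2 + lameCoupling μ lam τ ξ)‖ := by
        rw [lameDet_mul_eq hμ.ne' (by linarith), norm_mul, norm_mul, norm_I, one_mul, norm_real,
          Real.norm_eq_abs]
    _ ≤ ‖lameDet μ lam τ ξ‖ * (10 * Q) := by
        rw [norm_mul]
        gcongr
        exact norm_lameSymbol_sq_add_lameCoupling_le hμ hlam τ ξ

theorem lameDet_zero (ξ : ℝ) : lameDet μ lam 0 ξ = 0 := by
  simp only [lameDet, ofReal_zero, mul_zero, zero_div, zero_add]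
  rw [mul_assoc _ (csqrt _), ← sq, csqrt_sq]
  ring

end Lame

/-- nondegeneracy and two-sided bounds for the Lopatinskii determinant of
the Lamé system in the half-plane: for `μ > 0` and `λ + μ > 0`, `det𝒜(τ,ξ₁) = 0` iff
`τ = 0`, and there exist `0 < c < C` with
`c|τ|√(τ²+μ²ξ₁⁴) ≤ |det𝒜(τ,ξ₁)| ≤ C(τ²+μ²ξ₁⁴)` for all `(τ,ξ₁) ∈ ℝ²`. -/
theorem lame_lopatinskii_determinant
    (μ lam : ℝ) (hμ : 0 < μ) (hlam : 0 < lam + μ) :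
    (∀ τ ξ : ℝ, lameDet μ lam τ ξ = 0 ↔ τ = 0) ∧
    ∃ c C : ℝ, 0 < c ∧ c < C ∧ ∀ τ ξ : ℝ,
      c * |τ| * Real.sqrt (τ^2 + μ^2 * ξ^4) ≤ ‖lameDet μ lam τ ξ‖ ∧
        ‖lameDet μ lam τ ξ‖ ≤ C * (τ^2 + μ^2 * ξ^4) := by
  obtain ⟨c, hc, hlower⟩ := exists_pos_mul_abs_mul_sqrt_le_norm_lameDet hμ hlam
  refine ⟨fun τ ξ => ⟨fun hdet => ?_, fun hτ => hτ ▸ lameDet_zero ξ⟩,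
    c, c + 10, hc, by linarith, fun τ ξ => ⟨hlower τ ξ, ?_⟩⟩
  · by_contra hτ
    have hpos : 0 < c * |τ| * √(τ ^ 2 + μ ^ 2 * ξ ^ 4) := by positivity
    linarith [hlower τ ξ, norm_eq_zero.2 hdet]
  · calc ‖lameDet μ lam τ ξ‖ ≤ 10 * (τ ^ 2 + μ ^ 2 * ξ ^ 4) := norm_lameDet_le hμ hlam τ ξ
      _ ≤ (c + 10) * (τ ^ 2 + μ ^ 2 * ξ ^ 4) := by gcongr; linarith
end
end
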